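/- With the debugger relation →_d of the previous setup, snapshot soundness holds: if (K_0, [K_0]) →_d* (K, S), then every state appearing in the snapshot list S is reachable from K_0 via →*. -/
import Mathlib


/-- The debugger step relation on pairs of a current state and a snapshot list:
forward rules optionally append the new state to the snapshot list, and the
backward rule moves the current state to any state reachable from the last
snapshot, optionally popping the last snapshot provided the list retains at
least one element. -/
inductive DStep {K : Type*} (step : K → K → Prop) :
    K × List K → K × List K → Prop
  | forward {k k' : K} {S : List K} (h : step k k') :
      DStep step (k, S) (k', S)
  | forwardSnap {k k' : K} {S : List K} (h : step k k') :
      DStep step (k, S) (k', S ++ [k'])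
  | backward {k kn km : K} {S : List K}
      (h : Relation.ReflTransGen step kn km) :
      DStep step (k, S ++ [kn]) (km, S ++ [kn])
  | backwardPop {k kn km : K} {S : List K} (hS : S ≠ [])
      (h : Relation.ReflTransGen step kn km) :
      DStep step (k, S ++ [kn]) (km, S)

theorem stmt5_aux {K : Type*} (step : K → K → Prop) (k0 : K) (p : K × List K)
    (h : Relation.ReflTransGen (DStep step) (k0, [k0]) p) :
    (∀ s ∈ p.2, Relation.ReflTransGen step k0 s) ∧
      Relation.ReflTransGen step k0 p.1 := by
  induction h with
  | refl => exact ⟨by intro s hs; simp at hs; subst hs; exact .refl, .refl⟩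
  | tail _ hstep ih =>
    obtain ⟨hS, hk⟩ := ih
    cases hstep with
    | forward h => exact ⟨hS, hk.tail h⟩
    | forwardSnap h =>
      refine ⟨?_, hk.tail h⟩
      intro s hs
      rcases List.mem_append.1 hs with hs | hs
      · exact hS s hs
      · simp at hs; subst hs; exact hk.tail h
    | backward h =>
      exact ⟨hS, (hS _ (by simp)).trans h⟩
    | backwardPop hS' h =>
      exact ⟨fun s hs => hS s (List.mem_append_left _ hs),
        (hS _ (by simp)).trans h⟩

/-- Snapshot soundness: if the debugger, started from `(k0, [k0])`, reaches
`(k, S)`, then every state in the snapshot list `S` is reachable from `k0`. -/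
theorem stmt5 {K : Type*} (step : K → K → Prop) (k0 : K) (k : K) (S : List K)
    (h : Relation.ReflTransGen (DStep step) (k0, [k0]) (k, S)) :
    ∀ s ∈ S, Relation.ReflTransGen step k0 s := by
  exact (stmt5_aux step k0 (k, S) h).1
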